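/- Let A be an associative unital C-algebra and D a derivation of A. Let F be a formal group over C with logarithm f. Define Y_F(a,x)b = (e^{f(x)D} a)·b for a,b ∈ A. Then (A, Y_F, 1) is a nonlocal vertex F-algebra, and it is a vertex F-algebra if and only if A is commutative. -/

import Mathlib

open scoped Classical
noncomputable section


/-! ### Substitution machinery for (multivariable) formal power series -/

variable {R : Type*} [CommRing R] {σ : Type*}

/-- Build a multivariate power series from its coefficient function. -/
def mvmk (f : (σ →₀ ℕ) → R) : MvPowerSeries σ R := f

/-- Total degree of a monomial exponent. -/
def wt (d : σ →₀ ℕ) : ℕ := d.sum fun _ n => n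

/-- Substitution `f(u)` of a multivariate series `u` with zero constant term into a
one-variable power series `f`. -/
def pcompMv (f : PowerSeries R) (u : MvPowerSeries σ R) : MvPowerSeries σ R :=
  mvmk fun d => MvPowerSeries.coeff (R := R) d
    (∑ k ∈ Finset.range (wt d + 1), MvPowerSeries.C (σ := σ) (R := R) (PowerSeries.coeff (R := R) k f) * u ^ k)

/-- Composition `f(g)` of one-variable power series, for `g` with zero constant term. -/
def pcomp (f g : PowerSeries R) : PowerSeries R :=
  PowerSeries.mk fun n => PowerSeries.coeff (R := R) n
    (∑ k ∈ Finset.range (n + 1), PowerSeries.C (R := R) (PowerSeries.coeff (R := R) k f) * g ^ k)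

/-- Substitution `F(a,b)` of two series with zero constant term into a two-variable series. -/
def subst2 (F : MvPowerSeries (Fin 2) R) (a b : MvPowerSeries σ R) : MvPowerSeries σ R :=
  mvmk fun d => MvPowerSeries.coeff (R := R) d
    (∑ p ∈ Finset.range (wt d + 1) ×ˢ Finset.range (wt d + 1),
      MvPowerSeries.C (σ := σ) (R := R)
          (MvPowerSeries.coeff (R := R) (Finsupp.single (0 : Fin 2) p.1 + Finsupp.single (1 : Fin 2) p.2) F)
        * a ^ p.1 * b ^ p.2)

/-- The one-variable power series `f` viewed in variable `i` of a two-variable ring. -/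
def toMv (i : Fin 2) (f : PowerSeries R) : MvPowerSeries (Fin 2) R :=
  mvmk fun d => if d = Finsupp.single i (d i) then PowerSeries.coeff (R := R) (d i) f else 0

/-- `F` is a one-dimensional formal group law: `F(x,0)=x`, `F(0,y)=y`,
`F(x,F(y,z))=F(F(x,y),z)`. -/
def IsFGL (F : MvPowerSeries (Fin 2) R) : Prop :=
  subst2 F (MvPowerSeries.X 0) 0 = (MvPowerSeries.X 0 : MvPowerSeries (Fin 2) R) ∧
  subst2 F 0 (MvPowerSeries.X 1) = (MvPowerSeries.X 1 : MvPowerSeries (Fin 2) R) ∧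
  subst2 F (MvPowerSeries.X 0) (subst2 F (MvPowerSeries.X 1) (MvPowerSeries.X 2)) =
    subst2 F (subst2 F (MvPowerSeries.X 0) (MvPowerSeries.X 1))
      (MvPowerSeries.X 2 : MvPowerSeries (Fin 3) R)

/-! ### Laurent series machinery -/

/-- The Laurent series variable `x`. -/
def xL : LaurentSeries ℂ := HahnSeries.single 1 1

theorem isPWO_Ici (a : ℤ) : (Set.Ici a).IsPWO := by
  have h : Set.Ici a = (fun n : ℕ => a + n) '' Set.univ := by
    ext n
    simp only [Set.mem_Ici, Set.mem_image, Set.mem_univ, true_and]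
    constructor
    · intro h; exact ⟨(n - a).toNat, by omega⟩
    · rintro ⟨m, rfl⟩; omega
  rw [h]
  exact ((Set.isWF_univ_iff.2 (inferInstance : WellFoundedLT ℕ)).isPWO).image_of_monotone
    (fun x y hxy => by omega)

/-- Substitution `c(g)` of a Laurent series `g` of order one into a Laurent series `c`,
defined coefficientwise (using `zpow` in the field of Laurent series). -/
def lsubst (g c : LaurentSeries ℂ) : LaurentSeries ℂ :=
  { coeff := fun a => ∑ m ∈ Finset.Icc c.order a, c.coeff m * (g ^ m).coeff a
    isPWO_support' := (isPWO_Ici c.order).mono (by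
      intro a ha
      simp only [Function.mem_support] at ha
      by_contra hc
      simp only [Set.mem_Ici, not_le] at hc
      rw [Finset.Icc_eq_empty (by omega), Finset.sum_empty] at ha
      exact ha rfl) }

/-- Formal derivative `d/dx` of a Laurent series. -/
def lderiv (c : LaurentSeries ℂ) : LaurentSeries ℂ :=
  { coeff := fun a => (a + 1 : ℤ) • c.coeff (a + 1)
    isPWO_support' := (c.isPWO_support.image_of_monotone
        (f := fun m => m - 1) (fun x y h => by dsimp only; omega)).mono (by
      intro a ha
      simp only [Function.mem_support] at ha
      refine ⟨a + 1, ?_, by ring⟩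
      intro h0
      exact ha (by rw [h0, smul_zero])) }

/-- `j`-th Hasse derivative `(1/j!) (d/dx)^j` of a Laurent series. -/
def hasse (j : ℕ) (c : LaurentSeries ℂ) : LaurentSeries ℂ := ((Nat.factorial j : ℂ))⁻¹ • lderiv^[j] c

/-- Taylor-expansion substitution `φ(ψ, w)`: substitute `ψ` (whose constant term in the
`z`-variables is `x`) for `x` and `w` (zero constant term) for `z` in
`φ(x,z) = Σ c_n(x) zⁿ`, via `c_n(ψ) = Σ_j (hasse_j c_n)(x) (ψ - x)^j`. -/
def fullComp (φ : PowerSeries (LaurentSeries ℂ)) (ψ w : MvPowerSeries (Fin 2) (LaurentSeries ℂ)) :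
    MvPowerSeries (Fin 2) (LaurentSeries ℂ) :=
  mvmk fun d => MvPowerSeries.coeff (R := (LaurentSeries ℂ)) d
    (∑ n ∈ Finset.range (wt d + 1), ∑ j ∈ Finset.range (wt d + 1),
      MvPowerSeries.C (σ := (Fin 2)) (R := (LaurentSeries ℂ)) (hasse j (PowerSeries.coeff (R := (LaurentSeries ℂ)) n φ))
        * (ψ - MvPowerSeries.C (σ := (Fin 2)) (R := (LaurentSeries ℂ)) xL) ^ j * w ^ n)

/-- `φ(x,z) ∈ ℂ((x))[[z]]` is an associate of the formal group law `F`: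
`φ(x,0) = x` and `φ(φ(x,z₁),z₂) = φ(x,F(z₁,z₂))`. -/
def IsAssoc (F : MvPowerSeries (Fin 2) ℂ) (φ : PowerSeries (LaurentSeries ℂ)) : Prop :=
  PowerSeries.constantCoeff (R := (LaurentSeries ℂ)) φ = xL ∧
  fullComp φ (toMv 0 φ) (MvPowerSeries.X 1) =
    fullComp φ (MvPowerSeries.C (σ := (Fin 2)) (R := (LaurentSeries ℂ)) xL)
      (MvPowerSeries.map (σ := Fin 2) (HahnSeries.C : ℂ →+* LaurentSeries ℂ) F)

/-- Application of a one-variable series `c` (as a Laurent series) to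
`ψ ∈ ℂ((x))[[z]]` whose constant term is the base point `w`, by Taylor expansion at `w`. -/
def acompAt (c w : LaurentSeries ℂ) (ψ : PowerSeries (LaurentSeries ℂ)) :
    PowerSeries (LaurentSeries ℂ) :=
  PowerSeries.mk fun n => PowerSeries.coeff (R := (LaurentSeries ℂ)) n
    (∑ j ∈ Finset.range (n + 1),
      PowerSeries.C (R := (LaurentSeries ℂ)) (lsubst w (hasse j c)) *
        (ψ - PowerSeries.C (R := (LaurentSeries ℂ)) w) ^ j)




/-! ### Vertex-algebra machinery -/

/-- `F(x₀,x₂)` viewed in `ℂ((x₀))[[x₂]]`. -/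
def FB (F : MvPowerSeries (Fin 2) ℂ) : PowerSeries (LaurentSeries ℂ) :=
  PowerSeries.mk fun j => HahnSeries.ofPowerSeries ℤ ℂ
    (PowerSeries.mk fun i =>
      MvPowerSeries.coeff (R := ℂ) (Finsupp.single (0 : Fin 2) i + Finsupp.single (1 : Fin 2) j) F)

/-- Integer power `F(x₀,x₂)^k` computed in `ℂ((x₀))[[x₂]]` (negative powers via
`Ring.inverse`, which is the genuine inverse whenever `F(x,0)=x`). -/
def Fzp (F : MvPowerSeries (Fin 2) ℂ) (k : ℤ) : PowerSeries (LaurentSeries ℂ) :=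
  if 0 ≤ k then (FB F) ^ k.toNat else (Ring.inverse (FB F)) ^ (-k).toNat

/-- The coefficient of `x₀^a x₂^c` in `F(x₀,x₂)^k ∈ ℂ((x₀))[[x₂]]`. -/
def FzC (F : MvPowerSeries (Fin 2) ℂ) (k : ℤ) (a c : ℤ) : ℂ :=
  if 0 ≤ c then (PowerSeries.coeff (R := (LaurentSeries ℂ)) c.toNat (Fzp F k)).coeff a else 0

variable {V : Type*} [AddCommGroup V] [Module ℂ V]

/-- Vacuum property: `Y(𝟙,x)v = v`. -/
def Vacuum (Y : V → V → HahnSeries ℤ V) (vac : V) : Prop :=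
  ∀ v, Y vac v = HahnSeries.single 0 v

/-- Creation property: `Y(v,x)𝟙 ∈ V[[x]]` with constant term `v`.
(Here `(Y u v).coeff a` is the coefficient of `x^a` in `Y(u,x)v`.) -/
def Creation (Y : V → V → HahnSeries ℤ V) (vac : V) : Prop :=
  ∀ v, (∀ n : ℤ, n < 0 → (Y v vac).coeff n = 0) ∧ (Y v vac).coeff 0 = v

/-- Weak `F`-associativity: for all `u,v,w` there is `l` with
`F(x₀,x₂)^l Y(u,F(x₀,x₂))Y(v,x₂)w = F(x₀,x₂)^l Y(Y(u,x₀)v,x₂)w`,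
expressed through coefficients of `x₀^a x₂^b`. -/
def WeakFAssoc (F : MvPowerSeries (Fin 2) ℂ) (Y : V → V → HahnSeries ℤ V) : Prop :=
  ∀ u v w : V, ∃ l : ℕ, ∀ a b : ℤ,
    (∑ᶠ mn : ℤ × ℤ, FzC F ((l : ℤ) + mn.1) a (b - mn.2) • (Y u ((Y v w).coeff mn.2)).coeff mn.1)
    = ∑ᶠ mn : ℤ × ℤ, FzC F (l : ℤ) (a - mn.1) (b - mn.2) • (Y ((Y u v).coeff mn.1) w).coeff mn.2

/-- Weak commutativity: for all `u,v` there is `k` with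
`(x₁-x₂)^k Y(u,x₁)Y(v,x₂) = (x₁-x₂)^k Y(v,x₂)Y(u,x₁)`, in coefficients of `x₁^a x₂^b`. -/
def WeakComm (Y : V → V → HahnSeries ℤ V) : Prop :=
  ∀ u v : V, ∃ k : ℕ, ∀ (w : V) (a b : ℤ),
    (∑ i ∈ Finset.range (k + 1),
      ((-1 : ℂ) ^ (k - i) * (k.choose i : ℂ)) •
        (Y u ((Y v w).coeff (b - (k - i)))).coeff (a - i))
    = ∑ i ∈ Finset.range (k + 1),
      ((-1 : ℂ) ^ (k - i) * (k.choose i : ℂ)) •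
        (Y v ((Y u w).coeff (a - i))).coeff (b - (k - i))

/-! ### Products of fields in two variables (for Lemma on `g(x₁)-g(x₂)`) -/

variable {W : Type*} [AddCommGroup W] [Module ℂ W]

/-- Coefficient of `x₁^m x₂^n` in `q(x₁,x₂)·a(x₁)b(x₂)w`. -/
def prodCoeff (q : MvPowerSeries (Fin 2) ℂ) (a b : W →ₗ[ℂ] HahnSeries ℤ W) (w : W)
    (m n : ℤ) : W :=
  ∑ᶠ ij : ℕ × ℕ,
    MvPowerSeries.coeff (R := ℂ) (Finsupp.single (0 : Fin 2) ij.1 + Finsupp.single (1 : Fin 2) ij.2) q •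
      (a ((b w).coeff (n - ij.2))).coeff (m - ij.1)

/-- Coefficient of `x₁^m x₂^n` in `q(x₁,x₂)·b(x₂)a(x₁)w`. -/
def prodCoeff' (q : MvPowerSeries (Fin 2) ℂ) (a b : W →ₗ[ℂ] HahnSeries ℤ W) (w : W)
    (m n : ℤ) : W :=
  ∑ᶠ ij : ℕ × ℕ,
    MvPowerSeries.coeff (R := ℂ) (Finsupp.single (0 : Fin 2) ij.1 + Finsupp.single (1 : Fin 2) ij.2) q •
      (b ((a w).coeff (m - ij.1))).coeff (n - ij.2)

/-- Membership in `Hom(W, W((x₁,x₂)))` for the two-variable coefficient family. -/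
def MemHom2 (q : MvPowerSeries (Fin 2) ℂ) (a b : W →ₗ[ℂ] HahnSeries ℤ W) : Prop :=
  ∀ w : W, ∃ N : ℕ, ∀ m n : ℤ, (m < -(N : ℤ) ∨ n < -(N : ℤ)) → prodCoeff q a b w m n = 0



namespace VFA


-- STATEMENT 18
def YFD {B : Type*} [Ring B] [Algebra ℂ B] (D : B →ₗ[ℂ] B) (f : PowerSeries ℂ) :
    B → B → HahnSeries ℤ B := fun a b =>
  HahnSeries.ofPowerSeries ℤ B (PowerSeries.mk fun n =>
    (∑ k ∈ Finset.range (n + 1),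
      ((PowerSeries.coeff (R := ℂ) n (f ^ k)) / (Nat.factorial k : ℂ)) • (⇑D)^[k] a) * b)


/-!
Write `e^{tD}a = ∑ₖ tᵏ Dᵏa / k!`. The Leibniz rule makes `a ↦ e^{tD}a` multiplicative, and
`e^{sD}e^{tD} = e^{(s+t)D}`. Substituting `t = f(x)`, the logarithm identity
`f(F(x₀,x₂)) = f(x₀) + f(x₂)` turns
`Y(a,F(x₀,x₂))Y(b,x₂)c = e^{f(F(x₀,x₂))D}a · e^{f(x₂)D}b · c` into
`e^{f(x₂)D}(e^{f(x₀)D}a · b) · c = Y(Y(a,x₀)b,x₂)c`, so weak `F`-associativity holds with `l = 0`.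
The vacuum property holds because `D 1 = 0`, and creation because `Y(a,x)1 = e^{f(x)D}a`.
Weak commutativity with `k = 0` is commutativity of `A`; conversely, since `Y(a,x)1` has no
negative powers, the coefficient of `x₁⁰x₂ᵏ` in `(x₁ - x₂)ᵏ (Y(a,x₁)Y(b,x₂) - Y(b,x₂)Y(a,x₁))1`
is `(-1)ᵏ(ab - ba)`.
-/

open Finset

section ScalarSeries

open MvPowerSeries

lemma coeff_mvmk (g : (σ →₀ ℕ) → R) (d : σ →₀ ℕ) : coeff d (mvmk g) = g d := rfl

lemma wt_eq_degree (d : σ →₀ ℕ) : wt d = d.degree := rfl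

lemma wt_single_add_single (A b : ℕ) :
    wt (Finsupp.single (0 : Fin 2) A + Finsupp.single 1 b) = A + b := by
  simp [wt_eq_degree]

lemma coeff_pow_eq_zero_of_wt_lt {u : MvPowerSeries σ R} (hu : constantCoeff u = 0)
    {d : σ →₀ ℕ} {k : ℕ} (hk : wt d < k) : coeff d (u ^ k) = 0 :=
  coeff_eq_zero_of_constantCoeff_nilpotent (m := 1) (by simp [hu]) (by rw [← wt_eq_degree]; omega)

lemma coeff_pow_eq_zero_of_lt {f : PowerSeries R} (hf : f.constantCoeff = 0) {n k : ℕ}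
    (h : n < k) : PowerSeries.coeff n (f ^ k) = 0 :=
  PowerSeries.X_pow_dvd_iff.mp (pow_dvd_pow_of_dvd (PowerSeries.X_dvd_iff.mpr hf) k) n h

lemma constantCoeff_eq_zero_of_isFGL {F : MvPowerSeries (Fin 2) R} (hF : IsFGL F) :
    constantCoeff F = 0 := by
  have h := congrArg (coeff 0) hF.1
  rw [subst2, coeff_mvmk, wt_eq_degree] at h
  simpa using h

lemma coeff_subst_eq_sum_range {u : MvPowerSeries σ R} (hu : constantCoeff u = 0)
    (g : PowerSeries R) {d : σ →₀ ℕ} {N : ℕ} (hN : wt d ≤ N) :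
    coeff d (g.subst u) = ∑ k ∈ range (N + 1), PowerSeries.coeff k g * coeff d (u ^ k) := by
  rw [PowerSeries.coeff_subst (.of_constantCoeff_zero hu),
    finsum_eq_sum_of_support_subset _ (s := range (N + 1))]
  · simp only [smul_eq_mul]
  · intro k hk
    simp only [Function.mem_support, coe_range, Set.mem_Iio] at hk ⊢
    by_contra hkN
    exact hk (by rw [coeff_pow_eq_zero_of_wt_lt hu (by omega), smul_zero])

lemma pcompMv_eq_subst {u : MvPowerSeries σ R} (hu : constantCoeff u = 0) (g : PowerSeries R) :
    pcompMv g u = g.subst u := by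
  ext d
  rw [coeff_subst_eq_sum_range hu g le_rfl, pcompMv, coeff_mvmk, map_sum]
  simp only [coeff_C_mul]

lemma coeff_pcompMv_pow_eq_sum_range {F : MvPowerSeries σ R} (hF : constantCoeff F = 0)
    (f : PowerSeries R) (j : ℕ) {d : σ →₀ ℕ} {N : ℕ} (hN : wt d ≤ N) :
    coeff d (pcompMv f F ^ j) =
      ∑ m ∈ range (N + 1), PowerSeries.coeff m (f ^ j) * coeff d (F ^ m) := by
  rw [pcompMv_eq_subst hF, ← PowerSeries.subst_pow (.of_constantCoeff_zero hF),
    coeff_subst_eq_sum_range hF _ hN]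

lemma toMv_eq_subst (i : Fin 2) (g : PowerSeries R) : toMv i g = g.subst (X i) := by
  ext d
  rw [PowerSeries.coeff_subst_single]
  rfl

lemma toMv_pow (i : Fin 2) (g : PowerSeries R) (n : ℕ) : toMv i g ^ n = toMv i (g ^ n) := by
  simp only [toMv_eq_subst, PowerSeries.subst_pow (.X i)]

lemma coeff_toMv_mul_toMv (g h : PowerSeries R) (A b : ℕ) :
    coeff (Finsupp.single 0 A + Finsupp.single 1 b) (toMv 0 g * toMv 1 h) =
      PowerSeries.coeff A g * PowerSeries.coeff b h := by
  rw [coeff_mul, sum_eq_single (Finsupp.single 0 A, Finsupp.single 1 b)]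
  · simp [toMv, coeff_mvmk]
  · rintro ⟨p, q⟩ hpq hne
    simp only [HasAntidiagonal.mem_antidiagonal] at hpq
    rw [toMv, toMv, coeff_mvmk, coeff_mvmk]
    split_ifs with hp hq
    · refine absurd ?_ hne
      simp only at hp hq
      rw [hp, hq] at hpq ⊢
      clear hp hq hne
      simp_all [Finsupp.ext_iff, Fin.forall_fin_two]
    all_goals simp
  · simp

lemma coeff_toMv_add_toMv_pow (f g : PowerSeries R) (A b j : ℕ) :
    coeff (Finsupp.single 0 A + Finsupp.single 1 b) ((toMv 0 f + toMv 1 g) ^ j) =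
      ∑ x ∈ antidiagonal j,
        (j.choose x.1 : R) * (PowerSeries.coeff A (f ^ x.1) * PowerSeries.coeff b (g ^ x.2)) := by
  rw [(Commute.all _ _).add_pow', map_sum]
  refine sum_congr rfl fun x _ => ?_
  rw [nsmul_eq_mul, ← map_natCast (C (σ := Fin 2)), coeff_C_mul, toMv_pow, toMv_pow,
    coeff_toMv_mul_toMv]

end ScalarSeries

lemma sum_range_sum_antidiagonal {M : Type*} [AddCommMonoid M] (N : ℕ) (G : ℕ → ℕ → M)
    (hG : ∀ p q, N < p + q → G p q = 0) :
    ∑ k ∈ range (N + 1), ∑ x ∈ antidiagonal k, G x.1 x.2 =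
      ∑ p ∈ range (N + 1), ∑ q ∈ range (N + 1), G p q := by
  simp_rw [Nat.sum_antidiagonal_eq_sum_range_succ G, sum_range_diag_flip]
  refine sum_congr rfl fun p hp => sum_subset (range_subset_range.2 (by omega)) fun q hq hq' => ?_
  simp only [mem_range] at hp hq'
  exact hG p q (by omega)

lemma finsum_eq_sum_range_sum_range {M : Type*} [AddCommMonoid M] (g : ℤ × ℤ → M) (K L : ℕ)
    (hg : ∀ x, g x ≠ 0 → 0 ≤ x.1 ∧ x.1 ≤ K ∧ 0 ≤ x.2 ∧ x.2 ≤ L) :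
    ∑ᶠ x, g x = ∑ m ∈ range (K + 1), ∑ n ∈ range (L + 1), g (m, n) := by
  refine (finsum_eq_sum_of_support_subset g (s := (range (K + 1) ×ˢ range (L + 1)).map
    (Nat.castEmbedding.prodMap Nat.castEmbedding)) fun x hx => ?_).trans ?_
  · obtain ⟨h1, h2, h3, h4⟩ := hg x hx
    simp only [coe_map, coe_product, coe_range, Set.mem_image, Set.mem_prod, Set.mem_Iio,
      Prod.exists]
    exact ⟨x.1.toNat, x.2.toNat, ⟨by omega, by omega⟩,
      Prod.ext (Int.toNat_of_nonneg h1) (Int.toNat_of_nonneg h3)⟩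
  · rw [sum_map, sum_product]
    rfl

section Leibniz

variable {B : Type*} [Ring B] [Algebra R B]

open TensorProduct in
lemma pow_apply_mul (D : B →ₗ[R] B) (hD : ∀ a b : B, D (a * b) = D a * b + a * D b) (k : ℕ)
    (a b : B) :
    (D ^ k) (a * b) = ∑ x ∈ antidiagonal k, k.choose x.1 • ((D ^ x.1) a * (D ^ x.2) b) := by
  -- `D ∘ mul = mul ∘ (D ⊗ 1 + 1 ⊗ D)`, and the binomial theorem applies to the commuting
  -- summands `D ⊗ 1` and `1 ⊗ D`.
  set T : Module.End R (B ⊗[R] B) := map D 1 + map 1 D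
  have hT : D ∘ₗ LinearMap.mul' R B = LinearMap.mul' R B ∘ₗ T :=
    TensorProduct.ext' fun a b => by simp [T, hD]
  have hTk : (D ^ k) ∘ₗ LinearMap.mul' R B = LinearMap.mul' R B ∘ₗ T ^ k := by
    induction k with
    | zero => rfl
    | succ k ih => rw [pow_succ', pow_succ', Module.End.mul_eq_comp, Module.End.mul_eq_comp,
        LinearMap.comp_assoc, ih, ← LinearMap.comp_assoc, hT, LinearMap.comp_assoc]
  have hcomm : Commute (map D 1 : Module.End R (B ⊗[R] B)) (map 1 D) := by
    simp only [Commute, SemiconjBy, ← TensorProduct.map_mul, mul_one, one_mul]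
  have h := congrArg (fun L => L (a ⊗ₜ b)) hTk
  simp only [LinearMap.comp_apply, LinearMap.mul'_apply] at h
  rw [h, hcomm.add_pow', LinearMap.sum_apply, map_sum]
  refine sum_congr rfl fun x _ => ?_
  rw [LinearMap.smul_apply, map_nsmul, TensorProduct.map_pow, TensorProduct.map_pow, one_pow,
    one_pow, ← TensorProduct.map_mul, mul_one, one_mul, map_tmul, LinearMap.mul'_apply]

end Leibniz

lemma inv_factorial_mul_inv_factorial {𝕜 : Type*} [Field 𝕜] [CharZero 𝕜] (k p : ℕ) :
    (k.factorial : 𝕜)⁻¹ * (p.factorial : 𝕜)⁻¹ =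
      ((k + p).choose k : 𝕜) * ((k + p).factorial : 𝕜)⁻¹ := by
  have hc : ((k + p).choose p : 𝕜) ≠ 0 := by exact_mod_cast (Nat.choose_pos (by omega)).ne'
  rw [Nat.choose_symm_add, ← Nat.add_choose_mul_factorial_mul_factorial k p]
  push_cast
  field_simp

section Exponential

variable {𝕜 : Type*} [Field 𝕜] {B : Type*} [Ring B] [Algebra 𝕜 B] (D : B →ₗ[𝕜] B)

def dividedPower (k : ℕ) : Module.End 𝕜 B := (k.factorial : 𝕜)⁻¹ • D ^ k

lemma dividedPower_apply_one (hD : ∀ a b : B, D (a * b) = D a * b + a * D b) {k : ℕ}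
    (hk : k ≠ 0) : dividedPower D k 1 = 0 := by
  have hD1 : D 1 = 0 := by simpa using hD 1 1
  obtain ⟨k, rfl⟩ := Nat.exists_eq_succ_of_ne_zero hk
  rw [dividedPower, LinearMap.smul_apply, pow_succ, Module.End.mul_apply, hD1, map_zero, smul_zero]

/-- The coefficient of `xⁿ` in `e^{f(x)D}a`. -/
def expCoeff (f : PowerSeries 𝕜) (a : B) (n : ℕ) : B :=
  ∑ k ∈ range (n + 1), PowerSeries.coeff n (f ^ k) • dividedPower D k a

variable {f : PowerSeries 𝕜}

lemma expCoeff_at_zero (a : B) : expCoeff D f a 0 = a := by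
  simp [expCoeff, dividedPower]

lemma expCoeff_one (hD : ∀ a b : B, D (a * b) = D a * b + a * D b) (n : ℕ) :
    expCoeff D f 1 n = if n = 0 then 1 else 0 := by
  rw [expCoeff, sum_eq_single 0 (fun k _ hk => by rw [dividedPower_apply_one D hD hk, smul_zero])
    (by simp)]
  simp [dividedPower, PowerSeries.coeff_one]

lemma expCoeff_eq_sum_range (hf : f.constantCoeff = 0) (a : B) {n N : ℕ} (hn : n ≤ N) :
    expCoeff D f a n = ∑ k ∈ range (N + 1), PowerSeries.coeff n (f ^ k) • dividedPower D k a := by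
  refine sum_subset (range_subset_range.2 (by omega)) fun k _ hk => ?_
  rw [mem_range] at hk
  rw [coeff_pow_eq_zero_of_lt hf (by omega), zero_smul]

lemma sum_coeff_pow_smul_expCoeff {σ : Type*} {F : MvPowerSeries σ 𝕜}
    (hF : MvPowerSeries.constantCoeff F = 0) (hf : f.constantCoeff = 0) (u : B) {d : σ →₀ ℕ}
    {N : ℕ} (hN : wt d ≤ N) :
    ∑ m ∈ range (N + 1), MvPowerSeries.coeff d (F ^ m) • expCoeff D f u m =
      ∑ j ∈ range (N + 1), MvPowerSeries.coeff d (pcompMv f F ^ j) • dividedPower D j u := by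
  simp_rw [coeff_pcompMv_pow_eq_sum_range hF f _ hN, sum_smul]
  rw [sum_comm]
  refine sum_congr rfl fun m hm => ?_
  rw [expCoeff_eq_sum_range D hf u (mem_range_succ_iff.1 hm), smul_sum]
  exact sum_congr rfl fun j _ => by rw [smul_smul, mul_comm]

variable [CharZero 𝕜]

lemma dividedPower_apply_mul (hD : ∀ a b : B, D (a * b) = D a * b + a * D b) (k : ℕ) (a b : B) :
    dividedPower D k (a * b) =
      ∑ x ∈ antidiagonal k, dividedPower D x.1 a * dividedPower D x.2 b := by
  rw [dividedPower, LinearMap.smul_apply, pow_apply_mul D hD, smul_sum]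
  refine sum_congr rfl fun x hx => ?_
  rw [HasAntidiagonal.mem_antidiagonal] at hx
  subst hx
  rw [dividedPower, dividedPower, LinearMap.smul_apply, LinearMap.smul_apply, smul_mul_smul_comm,
    ← Nat.cast_smul_eq_nsmul 𝕜, smul_smul, mul_comm, inv_factorial_mul_inv_factorial]

lemma dividedPower_mul_dividedPower (k p : ℕ) :
    dividedPower D k * dividedPower D p = ((k + p).choose k : 𝕜) • dividedPower D (k + p) := by
  rw [dividedPower, dividedPower, dividedPower, smul_mul_smul_comm, ← pow_add, smul_smul,
    inv_factorial_mul_inv_factorial, mul_comm]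

lemma expCoeff_mul (hD : ∀ a b : B, D (a * b) = D a * b + a * D b) (hf : f.constantCoeff = 0)
    (a b : B) (n : ℕ) :
    expCoeff D f (a * b) n = ∑ x ∈ antidiagonal n, expCoeff D f a x.1 * expCoeff D f b x.2 := by
  calc expCoeff D f (a * b) n
      = ∑ k ∈ range (n + 1), ∑ x ∈ antidiagonal k,
          PowerSeries.coeff n (f ^ (x.1 + x.2)) •
            (dividedPower D x.1 a * dividedPower D x.2 b) := by
        simp_rw [expCoeff, dividedPower_apply_mul D hD, smul_sum]
        exact sum_congr rfl fun k _ => sum_congr rfl fun x hx => by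
          rw [HasAntidiagonal.mem_antidiagonal.1 hx]
    _ = ∑ p ∈ range (n + 1), ∑ q ∈ range (n + 1),
          PowerSeries.coeff n (f ^ (p + q)) • (dividedPower D p a * dividedPower D q b) :=
        sum_range_sum_antidiagonal n (fun p q => PowerSeries.coeff n (f ^ (p + q)) •
          (dividedPower D p a * dividedPower D q b)) fun p q h => by
            rw [coeff_pow_eq_zero_of_lt hf h, zero_smul]
    _ = ∑ x ∈ antidiagonal n, ∑ p ∈ range (n + 1), ∑ q ∈ range (n + 1),
          (PowerSeries.coeff x.1 (f ^ p) * PowerSeries.coeff x.2 (f ^ q)) •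
            (dividedPower D p a * dividedPower D q b) := by
        simp_rw [pow_add, PowerSeries.coeff_mul, sum_smul]
        exact (sum_congr rfl fun p _ => sum_comm).trans sum_comm
    _ = _ := by
        refine sum_congr rfl fun x hx => ?_
        rw [HasAntidiagonal.mem_antidiagonal] at hx
        rw [expCoeff_eq_sum_range D hf a (show x.1 ≤ n by omega),
          expCoeff_eq_sum_range D hf b (show x.2 ≤ n by omega), sum_mul_sum]
        simp_rw [smul_mul_smul_comm]

lemma expCoeff_expCoeff (hf : f.constantCoeff = 0) (u : B) {A b N : ℕ} (hN : A + b ≤ N) :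
    expCoeff D f (expCoeff D f u A) b =
      ∑ j ∈ range (N + 1), MvPowerSeries.coeff (Finsupp.single 0 A + Finsupp.single 1 b)
        ((toMv 0 f + toMv 1 f) ^ j) • dividedPower D j u := by
  have hvanish : ∀ p q, N < p + q →
      PowerSeries.coeff A (f ^ p) * PowerSeries.coeff b (f ^ q) = 0 := fun p q h => by
    rcases lt_or_ge A p with hp | hp
    · rw [coeff_pow_eq_zero_of_lt hf hp, zero_mul]
    · rw [coeff_pow_eq_zero_of_lt hf (by omega : b < q), mul_zero]
  calc expCoeff D f (expCoeff D f u A) b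
      = ∑ q ∈ range (N + 1), ∑ p ∈ range (N + 1), (PowerSeries.coeff b (f ^ q) *
          PowerSeries.coeff A (f ^ p)) • (dividedPower D q * dividedPower D p) u := by
        rw [expCoeff_eq_sum_range D hf _ (show b ≤ N by omega)]
        refine sum_congr rfl fun q _ => ?_
        rw [expCoeff_eq_sum_range D hf u (show A ≤ N by omega), map_sum, smul_sum]
        simp_rw [map_smul, smul_smul, Module.End.mul_apply]
    _ = ∑ p ∈ range (N + 1), ∑ q ∈ range (N + 1), ((p + q).choose p *
          (PowerSeries.coeff A (f ^ p) * PowerSeries.coeff b (f ^ q)) : 𝕜) •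
            dividedPower D (p + q) u := by
        rw [sum_comm]
        refine sum_congr rfl fun p _ => sum_congr rfl fun q _ => ?_
        rw [dividedPower_mul_dividedPower, LinearMap.smul_apply, smul_smul, add_comm q p,
          Nat.choose_symm_add]
        congr 1
        ring
    _ = ∑ k ∈ range (N + 1), ∑ x ∈ antidiagonal k, ((x.1 + x.2).choose x.1 *
          (PowerSeries.coeff A (f ^ x.1) * PowerSeries.coeff b (f ^ x.2)) : 𝕜) •
            dividedPower D (x.1 + x.2) u :=
        (sum_range_sum_antidiagonal N _ fun p q h => by
          rw [hvanish p q h, mul_zero, zero_smul]).symm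
    _ = _ := by
        simp_rw [coeff_toMv_add_toMv_pow, sum_smul]
        exact sum_congr rfl fun k _ => sum_congr rfl fun x hx => by
          rw [HasAntidiagonal.mem_antidiagonal.1 hx]

lemma sum_coeff_pow_smul_expCoeff_eq_expCoeff_expCoeff {F : MvPowerSeries (Fin 2) 𝕜}
    (hF : MvPowerSeries.constantCoeff F = 0) (hf : f.constantCoeff = 0)
    (hlog : pcompMv f F = toMv 0 f + toMv 1 f) (u : B) {A b N : ℕ} (hN : A + b ≤ N) :
    ∑ m ∈ range (N + 1),
        MvPowerSeries.coeff (Finsupp.single 0 A + Finsupp.single 1 b) (F ^ m) • expCoeff D f u m =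
      expCoeff D f (expCoeff D f u A) b := by
  rw [sum_coeff_pow_smul_expCoeff D hF hf u ((wt_single_add_single A b).trans_le hN), hlog,
    expCoeff_expCoeff D hf u hN]

lemma sum_sum_coeff_pow_smul_expCoeff_mul_expCoeff_mul
    (hD : ∀ a b : B, D (a * b) = D a * b + a * D b) {F : MvPowerSeries (Fin 2) 𝕜}
    (hF : MvPowerSeries.constantCoeff F = 0) (hf : f.constantCoeff = 0)
    (hlog : pcompMv f F = toMv 0 f + toMv 1 f) (u v w : B) (A b : ℕ) :
    ∑ m ∈ range (A + b + 1), ∑ n ∈ range (b + 1),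
        MvPowerSeries.coeff (Finsupp.single 0 A + Finsupp.single 1 (b - n)) (F ^ m) •
          (expCoeff D f u m * (expCoeff D f v n * w)) =
      expCoeff D f (expCoeff D f u A * v) b * w := by
  rw [expCoeff_mul D hD hf, sum_mul, ← Nat.sum_antidiagonal_swap]
  simp only [Prod.fst_swap, Prod.snd_swap]
  rw [Nat.sum_antidiagonal_eq_sum_range_succ (fun i j => expCoeff D f (expCoeff D f u A) j *
      expCoeff D f v i * w), sum_comm]
  refine sum_congr rfl fun n hn => ?_
  rw [mem_range] at hn
  simp_rw [← smul_mul_assoc, ← sum_mul, mul_assoc]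
  rw [sum_coeff_pow_smul_expCoeff_eq_expCoeff_expCoeff D hF hf hlog u (by omega)]

end Exponential

section FormalGroupPowers

lemma single_zero_add_single_one_eq (d : Fin 2 →₀ ℕ) :
    Finsupp.single 0 (d 0) + Finsupp.single 1 (d 1) = d := by
  ext i
  fin_cases i <;> simp

lemma coeff_FB (G : MvPowerSeries (Fin 2) ℂ) (j : ℕ) :
    PowerSeries.coeff j (FB G) = HahnSeries.ofPowerSeries ℤ ℂ
      (PowerSeries.mk fun i => MvPowerSeries.coeff (Finsupp.single 0 i + Finsupp.single 1 j) G) :=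
  PowerSeries.coeff_mk _ _

lemma FB_one : FB 1 = 1 := by
  ext j : 1
  rw [coeff_FB, PowerSeries.coeff_one, ← map_one (HahnSeries.ofPowerSeries ℤ ℂ),
    ← map_zero (HahnSeries.ofPowerSeries ℤ ℂ), ← apply_ite]
  congr 1
  ext i
  rw [PowerSeries.coeff_mk, MvPowerSeries.coeff_one]
  split_ifs <;> simp_all [Finsupp.ext_iff, Fin.forall_fin_two]

lemma FB_mul (G H : MvPowerSeries (Fin 2) ℂ) : FB (G * H) = FB G * FB H := by
  ext j : 1
  simp only [PowerSeries.coeff_mul, coeff_FB, ← map_mul, ← map_sum]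
  congr 1
  ext i
  simp only [PowerSeries.coeff_mk, map_sum, PowerSeries.coeff_mul, MvPowerSeries.coeff_mul]
  rw [← sum_product']
  refine sum_nbij' (fun x => ((x.1 1, x.2 1), (x.1 0, x.2 0)))
    (fun y => (Finsupp.single 0 y.2.1 + Finsupp.single 1 y.1.1,
      Finsupp.single 0 y.2.2 + Finsupp.single 1 y.1.2)) ?_ ?_ ?_ ?_ ?_ <;>
  simp +contextual [Finsupp.ext_iff, Fin.forall_fin_two, single_zero_add_single_one_eq]

lemma FB_pow (G : MvPowerSeries (Fin 2) ℂ) (m : ℕ) : FB (G ^ m) = FB G ^ m := by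
  induction m with
  | zero => rw [pow_zero, pow_zero, FB_one]
  | succ m ih => rw [pow_succ, pow_succ, FB_mul, ih]

lemma FzC_natCast (F : MvPowerSeries (Fin 2) ℂ) (m : ℕ) (a c : ℤ) :
    FzC F m a c = if a < 0 ∨ c < 0 then 0 else
      MvPowerSeries.coeff (Finsupp.single 0 a.natAbs + Finsupp.single 1 c.natAbs) (F ^ m) := by
  rcases lt_or_ge c 0 with hc | hc
  · simp [FzC, hc, not_le.2 hc]
  lift c to ℕ using hc
  simp [FzC, Fzp, ← FB_pow, coeff_FB, PowerSeries.coeff_coe, (Int.natCast_nonneg c).not_gt]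

lemma finsum_FzC_zero_smul {M : Type*} [AddCommMonoid M] [Module ℂ M]
    (F : MvPowerSeries (Fin 2) ℂ) (g : ℤ × ℤ → M) (a b : ℤ) :
    ∑ᶠ x : ℤ × ℤ, FzC F 0 (a - x.1) (b - x.2) • g x = g (a, b) := by
  have hFzC : ∀ a c : ℤ, FzC F 0 a c = if a = 0 ∧ c = 0 then 1 else 0 := fun a c => by
    rw [← Nat.cast_zero, FzC_natCast, pow_zero, MvPowerSeries.coeff_one]
    split_ifs <;> simp_all [Finsupp.ext_iff, Fin.forall_fin_two]
  rw [finsum_eq_single _ (a, b) fun x hx => ?_]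
  · simp [hFzC]
  simp only [ne_eq, Prod.ext_iff, not_and_or] at hx
  rw [hFzC, if_neg (by omega), zero_smul]

end FormalGroupPowers

section VertexAlgebra

variable {B : Type*} [Ring B] [Algebra ℂ B] (D : B →ₗ[ℂ] B) {f : PowerSeries ℂ}

lemma coeff_YFD (a b : B) (z : ℤ) :
    (YFD D f a b).coeff z = if z < 0 then 0 else expCoeff D f a z.natAbs * b := by
  rw [YFD, PowerSeries.coeff_coe]
  split_ifs
  · rfl
  rw [PowerSeries.coeff_mk, expCoeff]
  congr 1
  refine sum_congr rfl fun k _ => ?_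
  rw [dividedPower, LinearMap.smul_apply, Module.End.pow_apply, smul_smul, div_eq_mul_inv]

lemma coeff_YFD_natCast (a b : B) (n : ℕ) : (YFD D f a b).coeff n = expCoeff D f a n * b := by
  rw [coeff_YFD, if_neg (by omega), Int.natAbs_natCast]

lemma YFD_zero_left (b : B) : YFD D f 0 b = 0 := by
  ext z
  simp [coeff_YFD, expCoeff]

lemma YFD_zero_right (a : B) : YFD D f a 0 = 0 := by
  ext z
  simp [coeff_YFD]

lemma vacuum_YFD (hD : ∀ a b : B, D (a * b) = D a * b + a * D b) : Vacuum (YFD D f) 1 := by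
  intro v
  ext z
  rcases lt_or_ge z 0 with hz | hz
  · simp [coeff_YFD, hz, hz.ne]
  lift z to ℕ using hz
  rw [coeff_YFD_natCast, expCoeff_one D hD, HahnSeries.coeff_single]
  split_ifs <;> simp_all

lemma creation_YFD : Creation (YFD D f) 1 := fun v =>
  ⟨fun n hn => by simp [coeff_YFD, hn], by simp [coeff_YFD, expCoeff_at_zero]⟩

lemma weakComm_YFD_of_commute (hcomm : ∀ a b : B, a * b = b * a) : WeakComm (YFD D f) := by
  intro u v
  refine ⟨0, fun w a b => ?_⟩
  simp only [zero_add, sum_range_one, coeff_YFD]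
  split_ifs <;> simp [← mul_assoc, hcomm (expCoeff D f u _)]

lemma commute_of_weakComm_YFD (h : WeakComm (YFD D f)) (a b : B) : a * b = b * a := by
  obtain ⟨k, hk⟩ := h a b
  have h := hk 1 0 k
  rw [sum_eq_single 0 (fun i _ hi => by simp [coeff_YFD, Nat.pos_of_ne_zero hi]) (by simp),
    sum_eq_single 0 (fun i _ hi => by simp [coeff_YFD, Nat.pos_of_ne_zero hi, YFD_zero_right])
      (by simp)] at h
  simpa [coeff_YFD, expCoeff_at_zero] using h

lemma bounds_of_FzC_smul_coeff_YFD_ne_zero {F : MvPowerSeries (Fin 2) ℂ}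
    (hF : MvPowerSeries.constantCoeff F = 0) {u v w : B} {a b : ℤ} {x : ℤ × ℤ}
    (hx : FzC F x.1 a (b - x.2) • (YFD D f u ((YFD D f v w).coeff x.2)).coeff x.1 ≠ 0) :
    0 ≤ a ∧ 0 ≤ x.1 ∧ x.1 ≤ a + b ∧ 0 ≤ x.2 ∧ x.2 ≤ b := by
  obtain ⟨m, n⟩ := x
  rcases lt_or_ge m 0 with hm | hm
  · simp [coeff_YFD, hm] at hx
  rcases lt_or_ge n 0 with hn | hn
  · simp [coeff_YFD, hn, YFD_zero_right] at hx
  lift m to ℕ using hm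
  rw [FzC_natCast] at hx
  split_ifs at hx with h
  · simp at hx
  refine ⟨by omega, by omega, ?_, hn, by omega⟩
  by_contra hlt
  refine hx ?_
  rw [coeff_pow_eq_zero_of_wt_lt hF (by rw [wt_single_add_single]; omega), zero_smul]

lemma weakFAssoc_YFD (hD : ∀ a b : B, D (a * b) = D a * b + a * D b)
    {F : MvPowerSeries (Fin 2) ℂ} (hF : MvPowerSeries.constantCoeff F = 0)
    (hf : f.constantCoeff = 0) (hlog : pcompMv f F = toMv 0 f + toMv 1 f) :
    WeakFAssoc F (YFD D f) := by
  intro u v w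
  refine ⟨0, fun a b => ?_⟩
  simp only [Nat.cast_zero, zero_add, finsum_FzC_zero_smul F
    (fun x => (YFD D f ((YFD D f u v).coeff x.1) w).coeff x.2)]
  rcases lt_or_ge a 0 with ha | ha
  · rw [finsum_eq_zero_of_forall_eq_zero fun x => not_not.1 fun hx => by
      have := bounds_of_FzC_smul_coeff_YFD_ne_zero D hF hx; omega]
    simp [coeff_YFD, ha, YFD_zero_left]
  rcases lt_or_ge b 0 with hb | hb
  · rw [finsum_eq_zero_of_forall_eq_zero fun x => not_not.1 fun hx => by
      have := bounds_of_FzC_smul_coeff_YFD_ne_zero D hF hx; omega]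
    simp [coeff_YFD, hb]
  lift a to ℕ using ha
  lift b to ℕ using hb
  rw [finsum_eq_sum_range_sum_range _ (a + b) b fun x hx => by
      have := bounds_of_FzC_smul_coeff_YFD_ne_zero D hF hx; omega,
    coeff_YFD_natCast, coeff_YFD_natCast,
    ← sum_sum_coeff_pow_smul_expCoeff_mul_expCoeff_mul D hD hF hf hlog]
  refine sum_congr rfl fun m _ => sum_congr rfl fun n hn => ?_
  rw [mem_range] at hn
  dsimp only
  rw [show (b : ℤ) - n = ((b - n : ℕ) : ℤ) by omega, FzC_natCast, if_neg (by omega),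
    coeff_YFD_natCast, coeff_YFD_natCast, Int.natAbs_natCast, Int.natAbs_natCast]

end VertexAlgebra

theorem statement18_general {B : Type*} [Ring B] [Algebra ℂ B] (D : B →ₗ[ℂ] B)
    (hD : ∀ a b : B, D (a * b) = D a * b + a * D b)
    (F : MvPowerSeries (Fin 2) ℂ) (f : PowerSeries ℂ)
    (hF : IsFGL F) (hf0 : PowerSeries.constantCoeff (R := ℂ) f = 0)
    (hlog : pcompMv f F = toMv 0 f + toMv 1 f) :
    Vacuum (YFD D f) 1 ∧ Creation (YFD D f) 1 ∧ WeakFAssoc F (YFD D f) ∧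
      (WeakComm (YFD D f) ↔ ∀ a b : B, a * b = b * a) :=
  ⟨vacuum_YFD D hD, creation_YFD D,
    weakFAssoc_YFD D hD (constantCoeff_eq_zero_of_isFGL hF) hf0 hlog,
    ⟨commute_of_weakComm_YFD D, weakComm_YFD_of_commute D⟩⟩

theorem statement18 {B : Type*} [Ring B] [Algebra ℂ B] (D : B →ₗ[ℂ] B)
    (hD : ∀ a b : B, D (a * b) = D a * b + a * D b)
    (F : MvPowerSeries (Fin 2) ℂ) (f : PowerSeries ℂ)
    (hF : IsFGL F) (hf0 : PowerSeries.constantCoeff (R := ℂ) f = 0)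
    (hf1 : PowerSeries.coeff (R := ℂ) 1 f = 1) (hlog : pcompMv f F = toMv 0 f + toMv 1 f) :
    Vacuum (YFD D f) 1 ∧ Creation (YFD D f) 1 ∧ WeakFAssoc F (YFD D f) ∧
      (WeakComm (YFD D f) ↔ ∀ a b : B, a * b = b * a) :=
  statement18_general D hD F f hF hf0 hlog

end VFA
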